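/- arXiv:2108.04995 — 2 statements merged into one kernel-verified Lean document; each statement's English description precedes it below -/
import Mathlib

section
/- Let C be a code on n neurons and suppose the neuron j is trivial or redundant in C. Then C is convex if and only if the restricted code C|_{[n] ∖ {j}}, regarded as a code on the neuron set [n] ∖ {j}, is convex. -/
namespace NeuralCode

/-- `USet U σ` is `U_σ = ⋂ i ∈ σ, U i` (the whole space when `σ = ∅`). -/
def USet {ι : Type*} {d : ℕ} (U : ι → Set (EuclideanSpace ℝ (Fin d))) (σ : Finset ι) :
    Set (EuclideanSpace ℝ (Fin d)) :=
  ⋂ i ∈ σ, U i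

/-- The atom of the codeword `c` in the family `U`. -/
def codeAtom {ι : Type*} {d : ℕ} (U : ι → Set (EuclideanSpace ℝ (Fin d))) (c : Finset ι) :
    Set (EuclideanSpace ℝ (Fin d)) :=
  USet U c \ ⋃ j ∉ c, U j

/-- The family `U` (of open sets) is a realization of the code `C`. -/
def IsRealization {ι : Type*} {d : ℕ} (C : Set (Finset ι))
    (U : ι → Set (EuclideanSpace ℝ (Fin d))) : Prop :=
  (∀ i, IsOpen (U i)) ∧ ∀ c : Finset ι, c ∈ C ↔ (codeAtom U c).Nonempty

/-- The code `C` is convex: for some dimension `d` it admits a realization in `ℝ^d`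
by convex open sets. -/
def IsConvexCode {ι : Type*} (C : Set (Finset ι)) : Prop :=
  ∃ (d : ℕ) (U : ι → Set (EuclideanSpace ℝ (Fin d))),
    IsRealization C U ∧ ∀ i, Convex ℝ (U i)

/-- The trunk of `σ` in `C`: the set of codewords containing `σ`. -/
def trunk {ι : Type*} (C : Set (Finset ι)) (σ : Finset ι) : Set (Finset ι) :=
  {c | c ∈ C ∧ σ ⊆ c}

/-- The neural complex `Δ(C)` of `C`. -/
def neuralComplex {ι : Type*} (C : Set (Finset ι)) : Set (Finset ι) :=
  {σ | ∃ c ∈ C, σ ⊆ c}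

/-- Condition W(i). -/
def WheelWi {ι : Type*} {d : ℕ} (U : ι → Set (EuclideanSpace ℝ (Fin d)))
    (σ1 σ2 σ3 : Finset ι) : Prop :=
  USet U σ1 ∩ USet U σ2 = USet U σ1 ∩ USet U σ2 ∩ USet U σ3 ∧
    USet U σ1 ∩ USet U σ3 = USet U σ1 ∩ USet U σ2 ∩ USet U σ3 ∧
    USet U σ2 ∩ USet U σ3 = USet U σ1 ∩ USet U σ2 ∩ USet U σ3 ∧
    (USet U σ1 ∩ USet U σ2 ∩ USet U σ3).Nonempty

/-- Condition W(ii). -/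
def WheelWii {ι : Type*} {d : ℕ} (U : ι → Set (EuclideanSpace ℝ (Fin d)))
    (σ1 σ2 σ3 τ : Finset ι) : Prop :=
  USet U σ1 ∩ USet U σ2 ∩ USet U σ3 ∩ USet U τ = ∅

/-- Condition W(iii). -/
def WheelWiii {ι : Type*} {d : ℕ} (U : ι → Set (EuclideanSpace ℝ (Fin d)))
    (σ1 σ2 σ3 τ : Finset ι) : Prop :=
  (Convex ℝ (USet U τ) ∧ Convex ℝ (USet U σ1 ∩ USet U τ) ∧
      Convex ℝ (USet U σ2 ∩ USet U τ) ∧ Convex ℝ (USet U σ3 ∩ USet U τ)) →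
    ∃ x ∈ USet U σ1 ∩ USet U τ, ∃ y ∈ USet U σ3 ∩ USet U τ,
      (segment ℝ x y ∩ (USet U σ2 ∩ USet U τ)).Nonempty

/-- Condition W(iii)◦. -/
def WheelWiiiCirc {ι : Type*} {d : ℕ} (U : ι → Set (EuclideanSpace ℝ (Fin d)))
    (σ1 σ2 σ3 τ : Finset ι) : Prop :=
  (USet U σ1 ∩ USet U τ).Nonempty ∧ (USet U σ2 ∩ USet U τ).Nonempty ∧
    (USet U σ3 ∩ USet U τ).Nonempty

/-- `(σ1, σ2, σ3, τ)` is a wheel of the realization `U`. -/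
def IsWheelOfRealization {ι : Type*} {d : ℕ} (U : ι → Set (EuclideanSpace ℝ (Fin d)))
    (σ1 σ2 σ3 τ : Finset ι) : Prop :=
  WheelWi U σ1 σ2 σ3 ∧ WheelWii U σ1 σ2 σ3 τ ∧ WheelWiii U σ1 σ2 σ3 τ

/-- Condition P(i). -/
def CondPi {ι : Type*} [DecidableEq ι] (C : Set (Finset ι)) (σ1 σ2 σ3 : Finset ι) : Prop :=
  σ1 ∪ σ2 ∪ σ3 ∈ neuralComplex C ∧
    trunk C (σ1 ∪ σ2) = trunk C (σ1 ∪ σ2 ∪ σ3) ∧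
    trunk C (σ1 ∪ σ3) = trunk C (σ1 ∪ σ2 ∪ σ3) ∧
    trunk C (σ2 ∪ σ3) = trunk C (σ1 ∪ σ2 ∪ σ3)

/-- Condition P(ii). -/
def CondPii {ι : Type*} [DecidableEq ι] (C : Set (Finset ι)) (σ1 σ2 σ3 τ : Finset ι) : Prop :=
  σ1 ∪ σ2 ∪ σ3 ∪ τ ∉ neuralComplex C

/-- Condition P(iii)◦. -/
def CondPiiiCirc {ι : Type*} [DecidableEq ι] (C : Set (Finset ι)) (σ1 σ2 σ3 τ : Finset ι) :
    Prop :=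
  σ1 ∪ τ ∈ neuralComplex C ∧ σ2 ∪ τ ∈ neuralComplex C ∧ σ3 ∪ τ ∈ neuralComplex C

/-- `(σ1, σ2, σ3, τ)` is a sprocket of `C`. -/
def IsSprocket {ι : Type*} [DecidableEq ι] (C : Set (Finset ι)) (σ1 σ2 σ3 τ : Finset ι) :
    Prop :=
  σ1 ∈ neuralComplex C ∧ σ2 ∈ neuralComplex C ∧ σ3 ∈ neuralComplex C ∧
    τ ∈ neuralComplex C ∧
    CondPi C σ1 σ2 σ3 ∧ CondPii C σ1 σ2 σ3 τ ∧ CondPiiiCirc C σ1 σ2 σ3 τ ∧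
    ∃ ρ1 ∈ neuralComplex C, ∃ ρ3 ∈ neuralComplex C,
      trunk C (σ1 ∪ τ) ⊆ trunk C ρ1 ∧ trunk C (σ3 ∪ τ) ⊆ trunk C ρ3 ∧
      trunk C τ ⊆ trunk C ρ1 ∪ trunk C ρ3 ∧
      trunk C (ρ1 ∪ ρ3 ∪ τ) ⊆ trunk C σ2

/-- `F` is a facet of `Δ(C)`: an inclusion-maximal codeword of `C`. -/
def IsFacet {ι : Type*} (C : Set (Finset ι)) (F : Finset ι) : Prop :=
  F ∈ C ∧ ∀ c ∈ C, F ⊆ c → c = F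

/-- `τ` is a max-intersection face of `Δ(C)`: a face equal to the intersection of two or
more distinct facets. -/
def IsMaxIntersectionFace {ι : Type*} [DecidableEq ι] [Fintype ι] (C : Set (Finset ι))
    (τ : Finset ι) : Prop :=
  τ ∈ neuralComplex C ∧
    ∃ S : Finset (Finset ι), 2 ≤ S.card ∧ (∀ F ∈ S, IsFacet C F) ∧ τ = S.inf id

/-- The link graph of `τ` in `Δ(C)`. -/
def linkGraph {ι : Type*} [DecidableEq ι] (C : Set (Finset ι)) (τ : Finset ι) :
    SimpleGraph {i : ι // i ∉ τ ∧ insert i τ ∈ neuralComplex C} where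
  Adj a b := a ≠ b ∧ τ ∪ {(a : ι), (b : ι)} ∈ neuralComplex C
  symm := ⟨fun a b h => ⟨h.1.symm, by rw [Finset.pair_comm]; exact h.2⟩⟩
  loopless := ⟨fun a h => h.1 rfl⟩

/-- `(σ1, σ2, σ3, τ)` is a wire wheel of `C`. -/
def IsWireWheel {ι : Type*} [DecidableEq ι] (C : Set (Finset ι)) (σ1 σ2 σ3 τ : Finset ι) :
    Prop :=
  σ1 ∈ neuralComplex C ∧ σ2 ∈ neuralComplex C ∧ σ3 ∈ neuralComplex C ∧
    τ ∈ neuralComplex C ∧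
    CondPi C σ1 σ2 σ3 ∧ CondPii C σ1 σ2 σ3 τ ∧ τ ∉ C ∧
    (∀ ω : Finset ι, ω.card = 3 → Disjoint ω τ → τ ∪ ω ∉ neuralComplex C) ∧
    (linkGraph C τ).IsTree ∧
    ∃ v1 v2 v3 : {i : ι // i ∉ τ ∧ insert i τ ∈ neuralComplex C},
      σ1 \ τ = {(v1 : ι)} ∧ σ2 \ τ = {(v2 : ι)} ∧ σ3 \ τ = {(v3 : ι)} ∧
      ∀ p : (linkGraph C τ).Walk v1 v3, p.IsPath → v2 ∈ p.support

/-- `(σ1, σ3, τ)` is a wheel frame of `C`. -/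
def IsWheelFrame {ι : Type*} [DecidableEq ι] (C : Set (Finset ι)) (σ1 σ3 τ : Finset ι) :
    Prop :=
  σ1 ∈ neuralComplex C ∧ σ3 ∈ neuralComplex C ∧ τ ∈ neuralComplex C ∧
    (σ1 ∪ σ3 ∈ neuralComplex C ∧
      ∀ ω : Finset ι, ω ⊆ σ1 ∪ σ3 → ¬ω ⊆ σ1 → ¬ω ⊆ σ3 → ω ∪ τ ∈ neuralComplex C →
        trunk C (σ1 ∪ ω) = trunk C (σ1 ∪ σ3) ∧ trunk C (σ3 ∪ ω) = trunk C (σ1 ∪ σ3)) ∧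
    τ ∪ σ1 ∪ σ3 ∉ neuralComplex C ∧
    σ1 ∪ τ ∈ neuralComplex C ∧ σ3 ∪ τ ∈ neuralComplex C ∧
    σ1 ∩ σ3 = ∅ ∧
    trunk C τ ⊆ ⋃ i ∈ (σ1 ∪ σ3 : Finset ι), trunk C {i}

/-- A subset of `ℝ^d` is top-dimensional: every nonempty intersection with an open set
has nonempty interior. -/
def TopDimensional {d : ℕ} (S : Set (EuclideanSpace ℝ (Fin d))) : Prop :=
  ∀ O : Set (EuclideanSpace ℝ (Fin d)), IsOpen O → (S ∩ O).Nonempty →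
    (interior (S ∩ O)).Nonempty

/-- A realization is top-dimensional if each of its atoms is empty or top-dimensional. -/
def IsTopDimRealization {ι : Type*} {d : ℕ} (U : ι → Set (EuclideanSpace ℝ (Fin d))) :
    Prop :=
  ∀ c : Finset ι, codeAtom U c = ∅ ∨ TopDimensional (codeAtom U c)

/-- `C` is top-dimensionally convex. -/
def IsTopDimConvexCode {ι : Type*} (C : Set (Finset ι)) : Prop :=
  ∃ (d : ℕ) (U : ι → Set (EuclideanSpace ℝ (Fin d))),
    IsRealization C U ∧ IsTopDimRealization U ∧ ∀ i, Convex ℝ (U i)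

/-- The restriction `C|_χ = {c ∩ χ : c ∈ C}`, as a code on the neuron set `χ`. -/
def restrictCode {ι : Type*} [DecidableEq ι] (C : Set (Finset ι)) (χ : Finset ι) :
    Set (Finset {i : ι // i ∈ χ}) :=
  (fun c => c.subtype (· ∈ χ)) '' C

/-- Neuron `j` is trivial in `C`: no codeword contains it. -/
def TrivialNeuron {ι : Type*} (C : Set (Finset ι)) (j : ι) : Prop :=
  ∀ c ∈ C, j ∉ c

/-- Neuron `j` is redundant in `C`. -/
def RedundantNeuron {ι : Type*} [DecidableEq ι] (C : Set (Finset ι)) (j : ι) : Prop :=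
  ¬TrivialNeuron C j ∧ ∃ σ : Finset ι, j ∉ σ ∧ trunk C {j} = trunk C σ

/-- `C` is decomposable with embedded part supported on `φ`. -/
def IsDecomposable {ι : Type*} [DecidableEq ι] [Fintype ι] (C : Set (Finset ι))
    (φ : Finset ι) : Prop :=
  φ ≠ ∅ ∧ φ ≠ Finset.univ ∧
    ∃ ψ : Finset ι, Disjoint φ ψ ∧ ψ ≠ Finset.univ ∧ ψ ∈ C ∧
      ∀ c ∈ C, (c ∩ φ).Nonempty → ∃ φ' ⊆ φ, c = φ' ∪ ψ

end NeuralCode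

open NeuralCode

/-! A realization of `C` restricts to one of `C|_{[n] ∖ {j}}` by forgetting `U_j`. Conversely,
a convex realization `V` of the restricted code extends to one of `C` once `U_j` is chosen as an
open convex set containing a point exactly when that point's codeword in `C` contains `j`: for a
trivial neuron this is `∅`, and for a redundant one with `Tk_C({j}) = Tk_C(σ)` it is `V_σ`,
since a point lies in `V_σ` exactly when its codeword contains `σ`. -/

namespace NeuralCode

variable {ι : Type*} {d : ℕ}

open Classical in
noncomputable def codeword [Fintype ι] (U : ι → Set (EuclideanSpace ℝ (Fin d)))
    (x : EuclideanSpace ℝ (Fin d)) : Finset ι :=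
  {i | x ∈ U i}

section codeword

variable [Fintype ι] {U : ι → Set (EuclideanSpace ℝ (Fin d))} {x : EuclideanSpace ℝ (Fin d)}

@[simp]
lemma mem_codeword {i : ι} : i ∈ codeword U x ↔ x ∈ U i := by
  simp [codeword]

lemma mem_codeAtom_iff_codeword_eq {c : Finset ι} : x ∈ codeAtom U c ↔ codeword U x = c := by
  simp only [codeAtom, USet, Set.mem_sdiff, Set.mem_iInter, Set.mem_iUnion, not_exists,
    Finset.ext_iff, mem_codeword]
  exact ⟨fun ⟨hin, hout⟩ i => ⟨fun hx => by_contra fun hi => hout i hi hx, hin i⟩,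
    fun h => ⟨fun i hi => (h i).2 hi, fun i hi hx => hi ((h i).1 hx)⟩⟩

lemma mem_USet_iff_subset_codeword {σ : Finset ι} : x ∈ USet U σ ↔ σ ⊆ codeword U x := by
  simp [USet, Finset.subset_iff]

lemma isRealization_iff_range_codeword {C : Set (Finset ι)} :
    IsRealization C U ↔ (∀ i, IsOpen (U i)) ∧ Set.range (codeword U) = C := by
  simp only [IsRealization, Set.Nonempty, mem_codeAtom_iff_codeword_eq, Set.ext_iff,
    Set.mem_range]
  exact and_congr_right fun _ => forall_congr' fun _ => Iff.comm

lemma codeword_restrict [DecidableEq ι] (χ : Finset ι) :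
    codeword (fun i : {i // i ∈ χ} => U i) x = (codeword U x).subtype (· ∈ χ) := by
  ext i
  simp

end codeword

lemma IsConvexCode.restrict [Fintype ι] [DecidableEq ι] {C : Set (Finset ι)}
    (hC : IsConvexCode C) (χ : Finset ι) : IsConvexCode (restrictCode C χ) := by
  obtain ⟨d, U, hU, hconv⟩ := hC
  rw [isRealization_iff_range_codeword] at hU
  refine ⟨d, fun i : {i // i ∈ χ} => U i, ?_, fun i => hconv i⟩
  rw [isRealization_iff_range_codeword, restrictCode, ← hU.2, ← Set.range_comp]
  exact ⟨fun i => hU.1 i, congrArg Set.range (funext fun x => codeword_restrict χ)⟩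

section extend

variable [Fintype ι] [DecidableEq ι] {j : ι}

lemma _root_.Finset.mem_compl_singleton_of_ne {i : ι} (h : i ≠ j) : i ∈ ({j}ᶜ : Finset ι) := by
  simpa using h

def extendAt (V : {i // i ∈ ({j}ᶜ : Finset ι)} → Set (EuclideanSpace ℝ (Fin d)))
    (W : Set (EuclideanSpace ℝ (Fin d))) (i : ι) : Set (EuclideanSpace ℝ (Fin d)) :=
  if h : i = j then W else V ⟨i, Finset.mem_compl_singleton_of_ne h⟩

variable {V : {i // i ∈ ({j}ᶜ : Finset ι)} → Set (EuclideanSpace ℝ (Fin d))}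
  {W : Set (EuclideanSpace ℝ (Fin d))}

lemma _root_.Finset.eq_of_subtype_compl_singleton_eq {c c' : Finset ι}
    (h : c.subtype (· ∈ ({j}ᶜ : Finset ι)) = c'.subtype (· ∈ ({j}ᶜ : Finset ι)))
    (hj : j ∈ c ↔ j ∈ c') : c = c' := by
  ext i
  by_cases hi : i = j
  · exact hi ▸ hj
  · simpa using Finset.ext_iff.mp h ⟨i, Finset.mem_compl_singleton_of_ne hi⟩

lemma codeword_extendAt_eq_iff {x : EuclideanSpace ℝ (Fin d)} {c : Finset ι} :
    codeword (extendAt V W) x = c ↔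
      codeword V x = c.subtype (· ∈ ({j}ᶜ : Finset ι)) ∧ (x ∈ W ↔ j ∈ c) := by
  have hrestrict : (codeword (extendAt V W) x).subtype (· ∈ ({j}ᶜ : Finset ι)) =
      codeword V x := by
    ext ⟨i, hi⟩
    have hij : i ≠ j := by simpa using hi
    simp [extendAt, hij]
  have hj : j ∈ codeword (extendAt V W) x ↔ x ∈ W := by simp [extendAt]
  constructor
  · rintro rfl
    exact ⟨hrestrict.symm, hj.symm⟩
  · rintro ⟨hV, hW⟩
    exact Finset.eq_of_subtype_compl_singleton_eq (hrestrict.trans hV) (hj.trans hW)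

lemma IsRealization.extendAt {C : Set (Finset ι)}
    (hV : IsRealization (restrictCode C ({j}ᶜ)) V) (hW : IsOpen W)
    (hWj : ∀ c ∈ C, ∀ x, codeword V x = c.subtype (· ∈ ({j}ᶜ : Finset ι)) → (x ∈ W ↔ j ∈ c)) :
    IsRealization C (NeuralCode.extendAt V W) := by
  rw [isRealization_iff_range_codeword] at hV ⊢
  obtain ⟨hVopen, hVrange⟩ := hV
  refine ⟨fun i => ?_, Set.Subset.antisymm ?_ ?_⟩
  · unfold NeuralCode.extendAt
    split_ifs
    exacts [hW, hVopen _]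
  · rintro _ ⟨x, rfl⟩
    obtain ⟨c, hc, hcx⟩ : codeword V x ∈ restrictCode C ({j}ᶜ) := hVrange ▸ ⟨x, rfl⟩
    rw [← codeword_extendAt_eq_iff.mpr ⟨hcx.symm, hWj c hc x hcx.symm⟩] at hc
    exact hc
  · intro c hc
    obtain ⟨x, hx⟩ : c.subtype (· ∈ ({j}ᶜ : Finset ι)) ∈ Set.range (codeword V) :=
      hVrange ▸ ⟨c, hc, rfl⟩
    exact ⟨x, codeword_extendAt_eq_iff.mpr ⟨hx, hWj c hc x hx⟩⟩

lemma isConvexCode_of_extendAt {C : Set (Finset ι)}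
    (hV : IsRealization (restrictCode C ({j}ᶜ)) V) (hVconv : ∀ i, Convex ℝ (V i))
    (hW : IsOpen W) (hWconv : Convex ℝ W)
    (hWj : ∀ c ∈ C, ∀ x, codeword V x = c.subtype (· ∈ ({j}ᶜ : Finset ι)) → (x ∈ W ↔ j ∈ c)) :
    IsConvexCode C := by
  refine ⟨d, NeuralCode.extendAt V W, hV.extendAt hW hWj, fun i => ?_⟩
  unfold NeuralCode.extendAt
  split_ifs
  exacts [hWconv, hVconv _]

lemma TrivialNeuron.isConvexCode_of_restrict {C : Set (Finset ι)} (hj : TrivialNeuron C j)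
    (hC : IsConvexCode (restrictCode C ({j}ᶜ))) : IsConvexCode C := by
  obtain ⟨d, V, hV, hVconv⟩ := hC
  exact isConvexCode_of_extendAt hV hVconv isOpen_empty convex_empty
    fun c hc _ _ => iff_of_false (Set.notMem_empty _) (hj c hc)

lemma isConvexCode_of_restrict_of_trunk_eq {C : Set (Finset ι)} {σ : Finset ι} (hjσ : j ∉ σ)
    (htrunk : trunk C {j} = trunk C σ) (hC : IsConvexCode (restrictCode C ({j}ᶜ))) :
    IsConvexCode C := by
  obtain ⟨d, V, hV, hVconv⟩ := hC
  have hσ : ∀ c ∈ C, (j ∈ c ↔ σ ⊆ c) := fun c hc => by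
    simpa [trunk, hc] using Set.ext_iff.mp htrunk c
  have hσ_restrict : ∀ c : Finset ι, σ ⊆ c ↔
      σ.subtype (· ∈ ({j}ᶜ : Finset ι)) ⊆ c.subtype (· ∈ ({j}ᶜ : Finset ι)) := fun c => by
    refine ⟨fun h => Finset.subtype_mono h, fun h i hi => ?_⟩
    have hij : i ≠ j := fun hij => hjσ (hij ▸ hi)
    have hi' : (⟨i, Finset.mem_compl_singleton_of_ne hij⟩ : {i // i ∈ ({j}ᶜ : Finset ι)}) ∈
        σ.subtype (· ∈ ({j}ᶜ : Finset ι)) := Finset.mem_subtype.mpr hi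
    simpa using h hi'
  refine isConvexCode_of_extendAt (W := USet V (σ.subtype (· ∈ ({j}ᶜ : Finset ι)))) hV hVconv
    (isOpen_biInter_finset fun i _ => hV.1 i) (convex_iInter₂ fun i _ => hVconv i)
    fun c hc x hx => ?_
  rw [mem_USet_iff_subset_codeword, hx, hσ c hc, hσ_restrict]

end extend

end NeuralCode

/-- deleting a trivial or redundant neuron does not affect convexity. -/
theorem trivial_or_redundant_convex_iff {n : ℕ} (C : Set (Finset (Fin n))) (j : Fin n)
    (hj : TrivialNeuron C j ∨ RedundantNeuron C j) :
    IsConvexCode C ↔ IsConvexCode (restrictCode C ({j}ᶜ)) := by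
  refine ⟨fun hC => hC.restrict _, fun hC => ?_⟩
  rcases hj with htrivial | ⟨-, σ, hjσ, htrunk⟩
  · exact htrivial.isConvexCode_of_restrict hC
  · exact isConvexCode_of_restrict_of_trunk_eq hjσ htrunk hC
end

section
/- Suppose C is a decomposable code on n neurons, with embedded code C|_φ and ambient code C|_{[n] ∖ φ}. If the embedded code C|_φ is convex and the ambient code C|_{[n] ∖ φ} is top-dimensionally convex, then C is convex. (The hypothesis of top-dimensional convexity is placed on the ambient code, as required by the construction: a scaled convex realization of the embedded code is placed inside a full-dimensional atom of a top-dimensional convex realization of the ambient code.) -/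
open NeuralCode

/-! Decomposability says that every codeword of `C` either avoids `φ` or is `ψ` together with
some neurons of `φ`. In a convex realization of the ambient code the atom of `ψ` is
top-dimensional, hence contains a ball; after lifting both realizations to a common dimension,
place a scaled-down convex realization of the embedded code inside that ball. A point of the ball
sees `ψ` together with a codeword of the embedded code, a point outside it sees no neuron of `φ`
and a codeword of the ambient code, and by decomposability these are exactly the codewords
of `C`. -/

open Metric

namespace AffineMap

theorem homothety_surjective {k V P : Type*} [Field k] [AddCommGroup V] [Module k V]
    [AddTorsor V P] (p : P) {t : k} (ht : t ≠ 0) : Function.Surjective (homothety p t) :=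
  fun y => ⟨homothety p t⁻¹ y, by
    rw [← homothety_mul_apply, mul_inv_cancel₀ ht, homothety_one, id_apply]⟩

theorem preimage_homothety_ball {E : Type*} [NormedAddCommGroup E] [NormedSpace ℝ E] (p : E)
    {r R : ℝ} (hr : 0 < r) (hR : 0 < R) : homothety p (R / r) ⁻¹' ball p R = ball p r := by
  ext x
  simp only [Set.mem_preimage, mem_ball, dist_homothety_center, Real.norm_eq_abs,
    abs_of_pos (div_pos hR hr), dist_comm p x]
  rw [div_mul_eq_mul_div, div_lt_iff₀ hr, mul_lt_mul_iff_right₀ hR]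

end AffineMap

namespace NeuralCode

section Atoms

variable {ι : Type*} {d m : ℕ}

theorem mem_codeAtom_iff {U : ι → Set (EuclideanSpace ℝ (Fin d))} {c : Finset ι}
    {x : EuclideanSpace ℝ (Fin d)} : x ∈ codeAtom U c ↔ ∀ i, i ∈ c ↔ x ∈ U i := by
  simp only [codeAtom, USet, Set.mem_sdiff, Set.mem_iInter, Set.mem_iUnion, not_exists]
  exact ⟨fun ⟨h₁, h₂⟩ i => ⟨h₁ i, fun hx => by_contra fun hi => h₂ i hi hx⟩,
    fun h => ⟨fun i => (h i).1, fun i hi hx => hi ((h i).2 hx)⟩⟩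

theorem eq_of_mem_codeAtom {U : ι → Set (EuclideanSpace ℝ (Fin d))} {c c' : Finset ι}
    {x : EuclideanSpace ℝ (Fin d)} (h : x ∈ codeAtom U c) (h' : x ∈ codeAtom U c') : c = c' :=
  Finset.ext fun i => (mem_codeAtom_iff.1 h i).trans (mem_codeAtom_iff.1 h' i).symm

theorem mem_codeAtom_empty_of_subset {U : ι → Set (EuclideanSpace ℝ (Fin d))}
    {O : Set (EuclideanSpace ℝ (Fin d))} (hUO : ∀ i, U i ⊆ O) {x : EuclideanSpace ℝ (Fin d)}
    (hx : x ∉ O) : x ∈ codeAtom U ∅ :=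
  mem_codeAtom_iff.2 fun i => iff_of_false (Finset.notMem_empty i) fun hxU => hx (hUO i hxU)

theorem codeAtom_preimage (g : EuclideanSpace ℝ (Fin m) → EuclideanSpace ℝ (Fin d))
    (U : ι → Set (EuclideanSpace ℝ (Fin d))) (c : Finset ι) :
    codeAtom (fun i => g ⁻¹' U i) c = g ⁻¹' codeAtom U c := by
  ext x
  simp only [Set.mem_preimage, mem_codeAtom_iff]

theorem codeAtom_inter_inter (U : ι → Set (EuclideanSpace ℝ (Fin d)))
    (O : Set (EuclideanSpace ℝ (Fin d))) (c : Finset ι) :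
    codeAtom (fun i => U i ∩ O) c ∩ O = codeAtom U c ∩ O := by
  ext x
  simp only [Set.mem_inter_iff, mem_codeAtom_iff]
  exact ⟨fun ⟨h, hx⟩ => ⟨fun i => (h i).trans (and_iff_left hx), hx⟩,
    fun ⟨h, hx⟩ => ⟨fun i => (h i).trans (and_iff_left hx).symm, hx⟩⟩

end Atoms

section Realizations

variable {ι : Type*} {d m : ℕ} {C : Set (Finset ι)}

theorem IsRealization.preimage {U : ι → Set (EuclideanSpace ℝ (Fin d))} (hU : IsRealization C U)
    {g : EuclideanSpace ℝ (Fin m) → EuclideanSpace ℝ (Fin d)} (hg : Continuous g)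
    (hgs : Function.Surjective g) : IsRealization C (fun i => g ⁻¹' U i) :=
  ⟨fun i => (hU.1 i).preimage hg, fun c => by
    rw [hU.2 c, codeAtom_preimage, hgs.nonempty_preimage]⟩

theorem TopDimensional.interior_nonempty {S : Set (EuclideanSpace ℝ (Fin d))}
    (hS : TopDimensional S) (hne : S.Nonempty) : (interior S).Nonempty := by
  simpa using hS Set.univ isOpen_univ (by simpa using hne)

theorem exists_ball_subset_codeAtom_preimage {U : ι → Set (EuclideanSpace ℝ (Fin d))}
    (hU : IsRealization C U) (htop : IsTopDimRealization U) {c : Finset ι} (hc : c ∈ C)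
    {g : EuclideanSpace ℝ (Fin m) → EuclideanSpace ℝ (Fin d)} (hg : Continuous g)
    (hgs : Function.Surjective g) :
    ∃ p r, 0 < r ∧ ball p r ⊆ codeAtom (fun i => g ⁻¹' U i) c := by
  have hne := (hU.2 c).1 hc
  obtain ⟨q, hq⟩ := ((htop c).resolve_left hne.ne_empty).interior_nonempty hne
  obtain ⟨p, rfl⟩ := hgs q
  obtain ⟨r, hr, hball⟩ := Metric.isOpen_iff.1 (isOpen_interior.preimage hg) p hq
  rw [codeAtom_preimage]
  exact ⟨p, r, hr, hball.trans (Set.preimage_mono interior_subset)⟩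

def IsRealizationWithin (C : Set (Finset ι)) (U : ι → Set (EuclideanSpace ℝ (Fin d)))
    (O : Set (EuclideanSpace ℝ (Fin d))) : Prop :=
  ∀ c, c ∈ C ↔ (codeAtom U c ∩ O).Nonempty

theorem IsRealization.isRealizationWithin_inter {U : ι → Set (EuclideanSpace ℝ (Fin d))}
    (hU : IsRealization C U) {O : Set (EuclideanSpace ℝ (Fin d))}
    (hO : ∀ c ∈ C, (codeAtom U c ∩ O).Nonempty) :
    IsRealizationWithin C (fun i => U i ∩ O) O := fun c => by
  rw [codeAtom_inter_inter]
  exact ⟨hO c, fun h => (hU.2 c).2 (h.mono Set.inter_subset_left)⟩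

theorem IsRealization.exists_ball_inter_codeAtom_nonempty [Finite ι]
    {U : ι → Set (EuclideanSpace ℝ (Fin d))} (hU : IsRealization C U)
    (p : EuclideanSpace ℝ (Fin d)) :
    ∃ R, 0 < R ∧ ∀ c ∈ C, (codeAtom U c ∩ ball p R).Nonempty := by
  choose x hx using fun c : C => (hU.2 c).1 c.2
  obtain ⟨R, hR⟩ := (isBounded_iff_subset_ball p).1 (Set.finite_range x).isBounded
  refine ⟨max R 1, by positivity, fun c hc => ⟨x ⟨c, hc⟩, hx ⟨c, hc⟩, ?_⟩⟩
  exact ball_subset_ball (le_max_left R 1) (hR ⟨⟨c, hc⟩, rfl⟩)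

/-- A homothety about `p` shrinks the part of `U` seen from a large ball `ball p R`, which meets
every atom, into the prescribed ball `ball p r`. -/
theorem IsRealization.exists_isRealizationWithin_ball [Finite ι]
    {U : ι → Set (EuclideanSpace ℝ (Fin d))} (hU : IsRealization C U)
    (hconv : ∀ i, Convex ℝ (U i)) (p : EuclideanSpace ℝ (Fin d)) {r : ℝ} (hr : 0 < r) :
    ∃ V : ι → Set (EuclideanSpace ℝ (Fin d)), (∀ i, IsOpen (V i)) ∧ (∀ i, Convex ℝ (V i)) ∧
      (∀ i, V i ⊆ ball p r) ∧ IsRealizationWithin C V (ball p r) := by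
  obtain ⟨R, hR, hmeet⟩ := hU.exists_ball_inter_codeAtom_nonempty p
  set H := AffineMap.homothety p (R / r)
  have hHs : Function.Surjective H := AffineMap.homothety_surjective p (div_pos hR hr).ne'
  have hHU : IsRealization C (fun i => H ⁻¹' U i) :=
    hU.preimage (AffineMap.homothety_continuous p (R / r)) hHs
  refine ⟨fun i => H ⁻¹' U i ∩ ball p r, fun i => (hHU.1 i).inter isOpen_ball,
    fun i => ((hconv i).affine_preimage H).inter (convex_ball p r),
    fun i => Set.inter_subset_right, hHU.isRealizationWithin_inter fun c hc => ?_⟩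
  rw [codeAtom_preimage, ← AffineMap.preimage_homothety_ball p hr hR, ← Set.preimage_inter]
  exact hHs.nonempty_preimage.2 (hmeet c hc)

end Realizations

section Projection

variable {e m : ℕ}

noncomputable def projFirstCLM (h : e ≤ m) :
    EuclideanSpace ℝ (Fin m) →L[ℝ] EuclideanSpace ℝ (Fin e) :=
  ((EuclideanSpace.equiv (Fin e) ℝ).symm.toContinuousLinearMap).comp
    ((LinearMap.toContinuousLinearMap (LinearMap.funLeft ℝ ℝ (Fin.castLE h))).comp
      (EuclideanSpace.equiv (Fin m) ℝ).toContinuousLinearMap)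

theorem projFirstCLM_surjective (h : e ≤ m) : Function.Surjective (projFirstCLM h) := by
  simp only [projFirstCLM, ContinuousLinearMap.coe_comp]
  refine (EuclideanSpace.equiv (Fin e) ℝ).symm.surjective.comp
    (Function.Surjective.comp ?_ (EuclideanSpace.equiv (Fin m) ℝ).surjective)
  simpa [LinearMap.coe_toContinuousLinearMap'] using
    LinearMap.funLeft_surjective_of_injective ℝ ℝ _ (Fin.castLE_injective h)

end Projection

section Glue

variable {ι X : Type*} [DecidableEq ι] [Fintype ι]

def glue (φ : Finset ι) (V : φ → Set X) (W : (φᶜ : Finset ι) → Set X) : ι → Set X :=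
  fun i => if h : i ∈ φ then V ⟨i, h⟩ else W ⟨i, Finset.mem_compl.2 h⟩

theorem forall_glue {P : Set X → Prop} {φ : Finset ι} {V : φ → Set X}
    {W : (φᶜ : Finset ι) → Set X} (hV : ∀ i, P (V i)) (hW : ∀ i, P (W i)) (i : ι) :
    P (glue φ V W i) := by
  unfold glue
  split_ifs
  exacts [hV _, hW _]

theorem mem_codeAtom_glue {d : ℕ} {φ : Finset ι} {V : φ → Set (EuclideanSpace ℝ (Fin d))}
    {W : (φᶜ : Finset ι) → Set (EuclideanSpace ℝ (Fin d))} {c : Finset ι}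
    {x : EuclideanSpace ℝ (Fin d)} :
    x ∈ codeAtom (glue φ V W) c ↔
      x ∈ codeAtom V (c.subtype (· ∈ φ)) ∧ x ∈ codeAtom W (c.subtype (· ∈ φᶜ)) := by
  simp only [mem_codeAtom_iff, Subtype.forall, Finset.mem_subtype, Finset.mem_compl]
  refine ⟨fun h => ⟨fun i hi => ?_, fun i hi => ?_⟩, fun ⟨hV, hW⟩ i => ?_⟩
  · simpa [glue, hi] using h i
  · simpa [glue, hi] using h i
  · by_cases hi : i ∈ φ
    · simpa [glue, hi] using hV i hi
    · simpa [glue, hi] using hW i hi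

theorem eq_of_subtype_eq_of_subtype_compl_eq {φ c a : Finset ι}
    (h : c.subtype (· ∈ φ) = a.subtype (· ∈ φ)) (hc : c.subtype (· ∈ φᶜ) = a.subtype (· ∈ φᶜ)) :
    c = a := by
  ext i
  by_cases hi : i ∈ φ
  · simpa using Finset.ext_iff.1 h ⟨i, hi⟩
  · simpa using Finset.ext_iff.1 hc ⟨i, Finset.mem_compl.2 hi⟩

theorem subtype_eq_empty_or_subtype_compl_eq {C : Set (Finset ι)} {φ ψ : Finset ι}
    (hstruct : ∀ c ∈ C, (c ∩ φ).Nonempty → ∃ φ' ⊆ φ, c = φ' ∪ ψ) :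
    ∀ c ∈ C, c.subtype (· ∈ φ) = ∅ ∨ c.subtype (· ∈ φᶜ) = ψ.subtype (· ∈ φᶜ) := by
  intro c hc
  by_cases hcφ : (c ∩ φ).Nonempty
  · obtain ⟨φ', hφ', rfl⟩ := hstruct c hc hcφ
    refine Or.inr (Finset.ext fun ⟨i, hi⟩ => ?_)
    have hiφ' : i ∉ φ' := fun h => Finset.mem_compl.1 hi (hφ' h)
    simp [hiφ']
  · refine Or.inl (Finset.subtype_eq_empty.2 fun i hi hic => hcφ ⟨i, ?_⟩)
    exact Finset.mem_inter.2 ⟨hic, hi⟩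

theorem isRealization_glue {d : ℕ} {C : Set (Finset ι)} {φ ψ : Finset ι} (hdisj : Disjoint φ ψ)
    (hψC : ψ ∈ C) (hstruct : ∀ c ∈ C, (c ∩ φ).Nonempty → ∃ φ' ⊆ φ, c = φ' ∪ ψ)
    {W : (φᶜ : Finset ι) → Set (EuclideanSpace ℝ (Fin d))}
    (hW : IsRealization (restrictCode C φᶜ) W) {O : Set (EuclideanSpace ℝ (Fin d))}
    (hO : O ⊆ codeAtom W (ψ.subtype (· ∈ φᶜ))) {V : φ → Set (EuclideanSpace ℝ (Fin d))}
    (hVopen : ∀ i, IsOpen (V i)) (hVO : ∀ i, V i ⊆ O)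
    (hV : IsRealizationWithin (restrictCode C φ) V O) :
    IsRealization C (glue φ V W) := by
  have hψφ : ψ.subtype (· ∈ φ) = ∅ :=
    Finset.subtype_eq_empty.2 fun i hi hiψ => Finset.disjoint_left.1 hdisj hi hiψ
  have hsplit := subtype_eq_empty_or_subtype_compl_eq hstruct
  refine ⟨forall_glue hVopen hW.1, fun c => ⟨fun hc => ?_, fun ⟨x, hx⟩ => ?_⟩⟩
  · by_cases hcψ : c.subtype (· ∈ φᶜ) = ψ.subtype (· ∈ φᶜ)
    · obtain ⟨x, hxV, hxO⟩ := (hV _).1 ⟨c, hc, rfl⟩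
      exact ⟨x, mem_codeAtom_glue.2 ⟨hxV, hcψ ▸ hO hxO⟩⟩
    · obtain ⟨x, hxW⟩ := (hW.2 _).1 ⟨c, hc, rfl⟩
      have hxO : x ∉ O := fun hxO => hcψ (eq_of_mem_codeAtom hxW (hO hxO))
      refine ⟨x, mem_codeAtom_glue.2 ⟨?_, hxW⟩⟩
      rw [(hsplit c hc).resolve_right hcψ]
      exact mem_codeAtom_empty_of_subset hVO hxO
  obtain ⟨hxV, hxW⟩ := mem_codeAtom_glue.1 hx
  by_cases hxO : x ∈ O
  · have hcψ := eq_of_mem_codeAtom hxW (hO hxO)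
    obtain ⟨a, ha, hac⟩ := (hV _).2 ⟨x, hxV, hxO⟩
    rcases hsplit a ha with haφ | haψ
    · rwa [eq_of_subtype_eq_of_subtype_compl_eq (hac.symm.trans (haφ.trans hψφ.symm)) hcψ]
    · rwa [eq_of_subtype_eq_of_subtype_compl_eq hac.symm (hcψ.trans haψ.symm)]
  · have hcφ := eq_of_mem_codeAtom hxV (mem_codeAtom_empty_of_subset hVO hxO)
    obtain ⟨a, ha, hac⟩ := (hW.2 _).2 ⟨x, hxW⟩
    rcases hsplit a ha with haφ | haψ
    · rwa [eq_of_subtype_eq_of_subtype_compl_eq (hcφ.trans haφ.symm) hac.symm]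
    · rwa [eq_of_subtype_eq_of_subtype_compl_eq (hcφ.trans hψφ.symm) (hac.symm.trans haψ)]

end Glue

end NeuralCode

/-- a decomposable code with convex embedded code and top-dimensionally
convex ambient code is convex. -/
theorem decomposable_convex {n : ℕ} (C : Set (Finset (Fin n))) (φ : Finset (Fin n))
    (hdec : IsDecomposable C φ)
    (hemb : IsConvexCode (restrictCode C φ))
    (hamb : IsTopDimConvexCode (restrictCode C φᶜ)) :
    IsConvexCode C := by
  obtain ⟨-, -, ψ, hdisj, -, hψC, hstruct⟩ := hdec
  obtain ⟨e, V, hV, hVconv⟩ := hemb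
  obtain ⟨d, W, hW, hWtop, hWconv⟩ := hamb
  have he : e ≤ max e d := le_max_left e d
  have hd : d ≤ max e d := le_max_right e d
  have hWm := hW.preimage (projFirstCLM hd).continuous (projFirstCLM_surjective hd)
  have hVm := hV.preimage (projFirstCLM he).continuous (projFirstCLM_surjective he)
  obtain ⟨p, r, hr, hball⟩ := exists_ball_subset_codeAtom_preimage hW hWtop ⟨ψ, hψC, rfl⟩
    (projFirstCLM hd).continuous (projFirstCLM_surjective hd)
  obtain ⟨V', hV'open, hV'conv, hV'ball, hV'⟩ := hVm.exists_isRealizationWithin_ball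
    (fun i => (hVconv i).linear_preimage (projFirstCLM he).toLinearMap) p hr
  exact ⟨max e d, glue φ V' fun i => projFirstCLM hd ⁻¹' W i,
    isRealization_glue hdisj hψC hstruct hWm hball hV'open hV'ball hV',
    forall_glue hV'conv fun i => (hWconv i).linear_preimage (projFirstCLM hd).toLinearMap⟩
end
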